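/- Let F(x,λ) = λ⁴ − (1+11x+84x²)·λ³ − 12x²(7+30x−28x²)·λ² + 288x⁴(1+4x+32x²)·λ − 27648x⁸. Then F(1,96) = 0, and if δ > 0 and λ : (1−δ, 1+δ) → ℝ is twice differentiable with λ(1) = 96 and F(x, λ(x)) = 0 for all x ∈ (1−δ, 1+δ), then e := λ′(1)/96 = 5488/3037 and v := (−λ′(1)² + 96·λ″(1) + 96·λ′(1))/96² = 4819233780/28011371653 > 0. -/

import Mathlib

/-!
Differentiating `F(x, λ(x)) = 0` once gives `F_x + F_λ λ' = 0`, and differentiating the left-hand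
side once more gives `F_xx + F_λx λ' + (F_xλ + F_λλ λ') λ' + F_λ λ'' = 0`. At `(1, 96)` the partial
derivatives are explicit integers with `F_λ(1, 96) = 874656 ≠ 0`, so these two linear equations
determine `λ'(1) = 526848/3037` and `λ''(1) = 4384338051456/28011371653`, from which `e` and `v`
are computed.
-/

open Set Filter Topology MvPolynomial

@[simp]
theorem Derivation.map_ofNat {R A M : Type*} [CommSemiring R] [CommSemiring A] [AddCommMonoid M]
    [Algebra R A] [Module A M] [Module R M] (D : Derivation R A M) (n : ℕ) [n.AtLeastTwo] :
    D (no_index (OfNat.ofNat n) : A) = 0 :=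
  D.map_natCast n

namespace MvPolynomial

variable {𝕜 : Type*} [NontriviallyNormedField 𝕜]

theorem hasDerivAt_eval_comp {σ : Type*} [Fintype σ] (p : MvPolynomial σ 𝕜)
    {g : σ → 𝕜 → 𝕜} {g' : σ → 𝕜} {t : 𝕜} (hg : ∀ i, HasDerivAt (g i) (g' i) t) :
    HasDerivAt (fun s => eval (fun i => g i s) p)
      (∑ i, eval (fun i => g i t) (pderiv i p) * g' i) t := by
  classical
  induction p using MvPolynomial.induction_on with
  | C a => simpa using hasDerivAt_const t a
  | add p q hp hq =>
    simpa only [map_add, add_mul, Finset.sum_add_distrib] using hp.fun_add hq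
  | mul_X p i hp =>
    simp only [map_mul, eval_X]
    refine (hp.fun_mul (hg i)).congr_deriv ?_
    simp only [pderiv_mul, pderiv_X, Pi.single_apply, mul_ite, mul_one, mul_zero, map_add, map_mul,
      eval_X, add_mul, Finset.sum_add_distrib, apply_ite (eval _), map_zero, ite_mul, zero_mul,
      Finset.sum_ite_eq, Finset.mem_univ, if_true, Finset.sum_mul]
    congr 1
    exact Finset.sum_congr rfl fun _ _ => by ring

variable {f : 𝕜 → 𝕜} {x : 𝕜}

theorem hasDerivAt_eval_graph (P : MvPolynomial (Fin 2) 𝕜) {f' : 𝕜} (hf : HasDerivAt f f' x) :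
    HasDerivAt (fun t => eval ![t, f t] P)
      (eval ![x, f x] (pderiv 0 P) + eval ![x, f x] (pderiv 1 P) * f') x := by
  have hg : ∀ i, HasDerivAt (fun t => ![t, f t] i) (![1, f'] i) x := by
    intro i
    fin_cases i
    · exact hasDerivAt_id x
    · exact hf
  simpa [Fin.sum_univ_two] using hasDerivAt_eval_comp P hg

theorem implicit_diff_first_order {P : MvPolynomial (Fin 2) 𝕜}
    (hP : ∀ᶠ t in 𝓝 x, eval ![t, f t] P = 0) {f' : 𝕜} (hf : HasDerivAt f f' x) :
    eval ![x, f x] (pderiv 0 P) + eval ![x, f x] (pderiv 1 P) * f' = 0 :=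
  (hasDerivAt_eval_graph P hf).unique ((hasDerivAt_const x 0).congr_of_eventuallyEq hP)

theorem implicit_diff_second_order {P : MvPolynomial (Fin 2) 𝕜}
    (hP : ∀ᶠ t in 𝓝 x, eval ![t, f t] P = 0)
    (hf : ∀ᶠ t in 𝓝 x, DifferentiableAt 𝕜 f t) {f'' : 𝕜} (hf' : HasDerivAt (deriv f) f'' x) :
    eval ![x, f x] (pderiv 0 (pderiv 0 P)) + eval ![x, f x] (pderiv 1 (pderiv 0 P)) * deriv f x +
      (eval ![x, f x] (pderiv 0 (pderiv 1 P)) +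
        eval ![x, f x] (pderiv 1 (pderiv 1 P)) * deriv f x) * deriv f x +
      eval ![x, f x] (pderiv 1 P) * f'' = 0 := by
  have hfirst : ∀ᶠ t in 𝓝 x,
      eval ![t, f t] (pderiv 0 P) + eval ![t, f t] (pderiv 1 P) * deriv f t = 0 := by
    filter_upwards [hP.eventually_nhds, hf] with t hPt hft
    exact implicit_diff_first_order hPt hft.hasDerivAt
  have hx := hf.self_of_nhds.hasDerivAt
  have hderiv := (hasDerivAt_eval_graph (pderiv 0 P) hx).add
    ((hasDerivAt_eval_graph (pderiv 1 P) hx).mul hf')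
  simpa only [add_assoc] using
    hderiv.unique ((hasDerivAt_const x 0).congr_of_eventuallyEq hfirst)

end MvPolynomial

noncomputable def gridCharPoly : MvPolynomial (Fin 2) ℝ :=
  X 1 ^ 4 - (1 + 11 * X 0 + 84 * X 0 ^ 2) * X 1 ^ 3 -
    12 * X 0 ^ 2 * (7 + 30 * X 0 - 28 * X 0 ^ 2) * X 1 ^ 2 +
    288 * X 0 ^ 4 * (1 + 4 * X 0 + 32 * X 0 ^ 2) * X 1 - 27648 * X 0 ^ 8

theorem eval_gridCharPoly (x l : ℝ) :
    eval ![x, l] gridCharPoly = l ^ 4 - (1 + 11 * x + 84 * x ^ 2) * l ^ 3 -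
      12 * x ^ 2 * (7 + 30 * x - 28 * x ^ 2) * l ^ 2 +
      288 * x ^ 4 * (1 + 4 * x + 32 * x ^ 2) * l - 27648 * x ^ 8 := by
  simp [gridCharPoly]

theorem eval_pderiv_gridCharPoly :
    eval ![1, 96] (pderiv 0 gridCharPoly) = -151732224 ∧
    eval ![1, 96] (pderiv 1 gridCharPoly) = 874656 ∧
    eval ![1, 96] (pderiv 0 (pderiv 0 gridCharPoly)) = -105394176 ∧
    eval ![1, 96] (pderiv 1 (pderiv 0 gridCharPoly)) = -4868352 ∧
    eval ![1, 96] (pderiv 0 (pderiv 1 gridCharPoly)) = -4868352 ∧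
    eval ![1, 96] (pderiv 1 (pderiv 1 gridCharPoly)) = 55080 := by
  norm_num [gridCharPoly]

theorem grid_euler_genus_parameters
    (F : ℝ → ℝ → ℝ)
    (hF : ∀ x l : ℝ, F x l = l ^ 4 - (1 + 11 * x + 84 * x ^ 2) * l ^ 3 -
      12 * x ^ 2 * (7 + 30 * x - 28 * x ^ 2) * l ^ 2 +
      288 * x ^ 4 * (1 + 4 * x + 32 * x ^ 2) * l - 27648 * x ^ 8) :
    F 1 96 = 0 ∧
    ∀ (δ : ℝ), 0 < δ → ∀ lam : ℝ → ℝ,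
      (∀ x ∈ Set.Ioo (1 - δ) (1 + δ), DifferentiableAt ℝ lam x) →
      (∀ x ∈ Set.Ioo (1 - δ) (1 + δ), DifferentiableAt ℝ (deriv lam) x) →
      lam 1 = 96 →
      (∀ x ∈ Set.Ioo (1 - δ) (1 + δ), F x (lam x) = 0) →
      deriv lam 1 / 96 = 5488 / 3037 ∧
      (-(deriv lam 1) ^ 2 + 96 * deriv (deriv lam) 1 + 96 * deriv lam 1) / 96 ^ 2 =
        4819233780 / 28011371653 ∧
      0 < (4819233780 : ℝ) / 28011371653 := by
  refine ⟨by rw [hF]; norm_num, fun δ hδ lam hlam hlam' hlam1 hroot => ?_⟩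
  have hU : Ioo (1 - δ) (1 + δ) ∈ 𝓝 (1 : ℝ) := Ioo_mem_nhds (by linarith) (by linarith)
  have hP : ∀ᶠ x in 𝓝 1, eval ![x, lam x] gridCharPoly = 0 := by
    filter_upwards [hU] with x hx
    rw [eval_gridCharPoly, ← hF]
    exact hroot x hx
  have first := implicit_diff_first_order hP (hlam 1 (mem_of_mem_nhds hU)).hasDerivAt
  have second := implicit_diff_second_order hP (eventually_of_mem hU hlam)
    (hlam' 1 (mem_of_mem_nhds hU)).hasDerivAt
  obtain ⟨h0, h1, h00, h10, h01, h11⟩ := eval_pderiv_gridCharPoly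
  rw [hlam1] at first second
  rw [h0, h1] at first
  rw [h1, h00, h10, h01, h11] at second
  have hd : deriv lam 1 = 526848 / 3037 := by linarith
  rw [hd] at second
  have hdd : deriv (deriv lam) 1 = 4384338051456 / 28011371653 := by linarith
  exact ⟨by rw [hd]; norm_num, by rw [hd, hdd]; norm_num, by norm_num⟩
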